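/- arXiv:1107.1561 — 2 statements merged into one kernel-verified Lean document; each statement's English description precedes it below -/
import Mathlib

section
/- Let X be a real m×n matrix whose columns are partitioned as X = [X₁, X₂, ..., X_k], where every column of X_i lies in a linear subspace S_i of ℝ^m, and suppose the subspaces S₁, ..., S_k are independent. Then the shape interaction matrix SIM(X) is block diagonal conforming to this partition: for any two column indices p and q belonging to different blocks X_i and X_j (i ≠ j), the (p,q) entry of SIM(X) is zero. -/
open Matrix RealInnerProductSpace

/-- The nuclear norm of a real matrix: the sum of its singular values
(the square roots of the eigenvalues of `Aᵀ * A`). -/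
noncomputable def nuclearNorm {m n : Type*} [Fintype m] [Fintype n] [DecidableEq n]
    (A : Matrix m n ℝ) : ℝ :=
  ∑ i, Real.sqrt ((show (Aᵀ * A).IsHermitian by
    simpa [conjTranspose_eq_transpose_of_trivial] using
      Matrix.isHermitian_conjTranspose_mul_self A).eigenvalues i)

/-- The shape interaction matrix of a real `m × n` matrix `X`: the `n × n`
orthogonal projection matrix onto the row space of `X`. -/
noncomputable def SIM {m n : ℕ} (X : Matrix (Fin m) (Fin n) ℝ) :
    Matrix (Fin n) (Fin n) ℝ :=
  let U : Submodule ℝ (EuclideanSpace ℝ (Fin n)) :=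
    Submodule.span ℝ (Set.range fun i => (WithLp.toLp 2 (X i) : EuclideanSpace ℝ (Fin n)))
  LinearMap.toMatrix'
    ((WithLp.linearEquiv 2 ℝ (Fin n → ℝ)).toLinearMap ∘ₗ
      ((U.subtypeL.comp (U.orthogonalProjection)).toLinearMap :
        EuclideanSpace ℝ (Fin n) →ₗ[ℝ] EuclideanSpace ℝ (Fin n)) ∘ₗ
      (WithLp.linearEquiv 2 ℝ (Fin n → ℝ)).symm.toLinearMap :
      (Fin n → ℝ) →ₗ[ℝ] (Fin n → ℝ))

/-!
Let `U` be the row space of `X` and `D` the coordinate projection onto the columns of one block.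
If `X v = 0`, grouping `∑ⱼ vⱼ xⱼ` by blocks and using independence shows that every block sum
vanishes, so `Uᗮ = ker X` is `D`-invariant. As `D` is symmetric, it then commutes with the
orthogonal projection `P` onto `U`, and `P e_q = P (D e_q) = D (P e_q)` is supported on the
block of `q`.
-/

open Submodule WithLp

theorem iSupIndep.sum_filter_eq_zero {R M ι κ : Type*} [Ring R] [AddCommGroup M] [Module R M]
    [DecidableEq κ] {S : κ → Submodule R M} (hS : iSupIndep S) {s : Finset ι} {c : ι → κ}
    {x : ι → M} (hx : ∀ j ∈ s, x j ∈ S (c j)) (h : ∑ j ∈ s, x j = 0) (t : κ) :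
    ∑ j ∈ s with c j = t, x j = 0 := by
  classical
  have hmaps : ∀ j ∈ s, c j ∈ insert t (s.image c) := fun j hj =>
    Finset.mem_insert_of_mem (Finset.mem_image_of_mem c hj)
  refine (iSupIndep_iff_finsetSum_eq_zero_imp_eq_zero S).1 hS (insert t (s.image c))
    (fun u => ∑ j ∈ s with c j = u, x j) (fun u _ => sum_mem fun j hj => ?_) ?_ t
    (Finset.mem_insert_self _ _)
  · obtain ⟨hjs, rfl⟩ := Finset.mem_filter.1 hj
    exact hx j hjs
  · rw [Finset.sum_fiberwise_of_maps_to hmaps, h]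

theorem Matrix.mulVec_ite_eq_zero_of_iSupIndep {R m ι κ : Type*} [CommRing R] [Fintype ι]
    [DecidableEq κ] {X : Matrix m ι R} {S : κ → Submodule R (m → R)} (hS : iSupIndep S)
    {c : ι → κ} (hcol : ∀ j, Xᵀ j ∈ S (c j)) {v : ι → R} (hv : X *ᵥ v = 0) (t : κ) :
    X *ᵥ (fun j => if c j = t then v j else 0) = 0 := by
  have hsum : ∀ w : ι → R, X *ᵥ w = ∑ j, w j • Xᵀ j := fun w => by
    simp only [mulVec_eq_sum, op_smul_eq_smul]
  rw [hsum, ← hS.sum_filter_eq_zero (fun j _ => (S (c j)).smul_mem (v j) (hcol j))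
    ((hsum v).symm.trans hv) t, Finset.sum_filter]
  simp only [ite_smul, zero_smul]

theorem mem_orthogonal_span_rows_iff {m ι : Type*} [Fintype ι] (X : Matrix m ι ℝ)
    (v : EuclideanSpace ℝ ι) :
    v ∈ (span ℝ (Set.range fun i => toLp 2 (X i)))ᗮ ↔ X *ᵥ ofLp v = 0 := by
  rw [← span_singleton_le_iff_mem, ← isOrtho_iff_le, isOrtho_comm, isOrtho_span]
  simp [funext_iff, EuclideanSpace.inner_eq_star_dotProduct, mulVec, dotProduct_comm]

theorem LinearMap.IsSymmetric.commute_starProjection {𝕜 E : Type*} [RCLike 𝕜]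
    [NormedAddCommGroup E] [InnerProductSpace 𝕜 E] [FiniteDimensional 𝕜 E] {T : E →ₗ[𝕜] E}
    (hT : T.IsSymmetric) {U : Submodule 𝕜 E} (hU : Uᗮ ∈ Module.End.invtSubmodule T) :
    Commute (U.starProjection : E →ₗ[𝕜] E) T := by
  have hP := ContinuousLinearMap.IsIdempotentElem.toLinearMap (isIdempotentElem_starProjection U)
  refine (LinearMap.IsIdempotentElem.commute_iff hP).2 ⟨?_, ?_⟩
  · rw [range_starProjection]
    simpa only [hT.adjoint_eq] using Module.End.mem_invtSubmodule_adjoint_iff.2 hU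
  · rw [ker_starProjection]
    exact hU

section blockMask

variable {ι κ : Type*} [Fintype ι] [DecidableEq ι] [DecidableEq κ] (c : ι → κ) (t : κ)

noncomputable def blockMask : EuclideanSpace ℝ ι →ₗ[ℝ] EuclideanSpace ℝ ι :=
  toEuclideanLin (diagonal fun j => if c j = t then 1 else 0)

theorem ofLp_blockMask (v : EuclideanSpace ℝ ι) :
    ofLp (blockMask c t v) = fun j => if c j = t then v j else 0 := by
  ext j
  simp [blockMask, ofLp_toLpLin, mulVec_diagonal]

theorem isSymmetric_blockMask : (blockMask c t).IsSymmetric :=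
  isSymmetric_toEuclideanLin_iff.2 (isHermitian_diagonal _)

theorem orthogonal_span_rows_mem_invtSubmodule_blockMask {m : Type*} {X : Matrix m ι ℝ}
    {S : κ → Submodule ℝ (m → ℝ)} (hS : iSupIndep S) (hcol : ∀ j, Xᵀ j ∈ S (c j)) :
    (span ℝ (Set.range fun i => toLp 2 (X i)))ᗮ ∈ Module.End.invtSubmodule (blockMask c t) := by
  refine (Module.End.mem_invtSubmodule_iff_forall_mem_of_mem _).2 fun v hv => ?_
  rw [mem_orthogonal_span_rows_iff] at hv ⊢
  rw [ofLp_blockMask]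
  exact mulVec_ite_eq_zero_of_iSupIndep hS hcol hv t

end blockMask

theorem SIM_apply {m n : ℕ} (X : Matrix (Fin m) (Fin n) ℝ) (p q : Fin n) :
    SIM X p q =
      (span ℝ (Set.range fun i => toLp 2 (X i))).starProjection (EuclideanSpace.single q 1) p :=
  rfl

/-- If the columns of `X` are partitioned into blocks (block label `c j` for column `j`),
each column of the `i`-th block lies in a linear subspace `S i` of `ℝ^m`, and the
subspaces `S 1, …, S k` are independent, then `SIM X` is block diagonal conforming to
the partition: entries joining different blocks vanish. -/
theorem sim_block_diagonal {m n k : ℕ} (X : Matrix (Fin m) (Fin n) ℝ)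
    (S : Fin k → Submodule ℝ (Fin m → ℝ)) (c : Fin n → Fin k)
    (hcol : ∀ j : Fin n, (fun i => X i j) ∈ S (c j))
    (hind : iSupIndep S) :
    ∀ p q : Fin n, c p ≠ c q → SIM X p q = 0 := by
  intro p q hpq
  set P := (span ℝ (Set.range fun i => toLp 2 (X i))).starProjection
  set D := blockMask c (c q)
  have hcomm : ∀ v, P (D v) = D (P v) := by
    have h := (isSymmetric_blockMask c (c q)).commute_starProjection
      (orthogonal_span_rows_mem_invtSubmodule_blockMask c (c q) hind hcol)
    intro v
    simpa only [Module.End.mul_apply, ContinuousLinearMap.coe_coe] using LinearMap.congr_fun h.eq v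
  have hq : D (EuclideanSpace.single q 1) = EuclideanSpace.single q 1 := by
    ext j
    by_cases h : j = q <;> simp [D, ofLp_blockMask, h]
  calc SIM X p q = P (D (EuclideanSpace.single q 1)) p := by rw [hq, SIM_apply]
    _ = D (P (EuclideanSpace.single q 1)) p := by rw [hcomm]
    _ = 0 := by simp [D, ofLp_blockMask, hpq]
end

section
/- Let X be a real m×n matrix of rank r with full singular value decompositions X = U_x S_x V_xᵀ, and let Z be a real n×n matrix with full singular value decomposition Z = U_z S_z V_zᵀ. Set M = V_xᵀ V_z and N = V_xᵀ U_z, and partition M and N by rows as M = [M_r; M_{n−r}] and N = [N_r; N_{n−r}], where M_r and N_r consist of the first r rows. Then X = XZ holds if and only if M_r = N_r S_z. -/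
open Matrix

/-!
Since `Ux` and `Vz` are orthogonal, `X = X * Z` is equivalent to `Sx * M = Sx * (N * Sz)`.
Left multiplication by the rectangular diagonal matrix `Sx` scales row `k` by the `k`-th
singular value, so this says that `M` and `N * Sz` agree on the rows whose singular value is
nonzero. The singular values are nonnegative and nonincreasing, and `rank X = rank (Sxᵀ * Sx)`
of them are nonzero, so these are exactly the first `r` rows.
-/

lemma Fin.mem_iff_lt_card_of_isLowerSet {n : ℕ} {s : Finset (Fin n)}
    (hs : IsLowerSet (s : Set (Fin n))) (j : Fin n) : j ∈ s ↔ (j : ℕ) < s.card := by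
  constructor
  · intro hj
    have hsub : Finset.Iic j ⊆ s := fun i hi => hs (Finset.mem_Iic.mp hi) hj
    have := Finset.card_le_card hsub
    rw [Fin.card_Iic] at this
    omega
  · intro hj
    by_contra hjs
    have hsub : s ⊆ Finset.Iio j := fun i hi =>
      Finset.mem_Iio.mpr (lt_of_not_ge fun hji => hjs (hs hji hi))
    have := Finset.card_le_card hsub
    rw [Fin.card_Iio] at this
    omega

lemma Antitone.isLowerSet_setOf_ne_zero {ι α : Type*} [Preorder ι] [PartialOrder α] [Zero α]
    {f : ι → α} (hf : Antitone f) (hf0 : ∀ i, 0 ≤ f i) : IsLowerSet {i | f i ≠ 0} :=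
  fun _ _ hij hj hi => hj (le_antisymm (hi ▸ hf hij) (hf0 _))

lemma Antitone.ne_zero_iff_lt_card {n : ℕ} {α : Type*} [PartialOrder α] [Zero α]
    [DecidableEq α] {f : Fin n → α} (hf : Antitone f) (hf0 : ∀ i, 0 ≤ f i) (j : Fin n) :
    f j ≠ 0 ↔ (j : ℕ) < Fintype.card {i // f i ≠ 0} := by
  rw [Fintype.card_subtype, ← Fin.mem_iff_lt_card_of_isLowerSet, Finset.mem_filter]
  · simp
  · simpa using hf.isLowerSet_setOf_ne_zero hf0

namespace Matrix

variable {m n : ℕ} {R : Type*}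

def IsRectDiag [Zero R] (S : Matrix (Fin m) (Fin n) R) : Prop :=
  ∀ (i : Fin m) (j : Fin n), (i : ℕ) ≠ j → S i j = 0

def rectDiag [Zero R] (S : Matrix (Fin m) (Fin n) R) (j : Fin n) : R :=
  if h : (j : ℕ) < m then S ⟨j, h⟩ j else 0

lemma apply_eq_rectDiag [Zero R] (S : Matrix (Fin m) (Fin n) R) (i : Fin m) (j : Fin n)
    (hij : (i : ℕ) = j) : S i j = rectDiag S j := by
  have hj : (j : ℕ) < m := hij ▸ i.isLt
  simp only [rectDiag, dif_pos hj]
  congr 1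
  exact Fin.ext hij

lemma rectDiag_nonneg [Zero R] [Preorder R] {S : Matrix (Fin m) (Fin n) R}
    (hS : ∀ (i : Fin m) (j : Fin n), (i : ℕ) = j → 0 ≤ S i j) (j : Fin n) :
    0 ≤ rectDiag S j := by
  unfold rectDiag
  split_ifs
  exacts [hS _ _ rfl, le_rfl]

lemma antitone_rectDiag [Zero R] [Preorder R] {S : Matrix (Fin m) (Fin n) R}
    (hS0 : ∀ (i : Fin m) (j : Fin n), (i : ℕ) = j → 0 ≤ S i j)
    (hS : ∀ (i i' : Fin m) (j j' : Fin n), (i : ℕ) = j → (i' : ℕ) = j' → (i : ℕ) ≤ i' →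
      S i' j' ≤ S i j) :
    Antitone (rectDiag S) := by
  intro j j' hjj'
  by_cases hj' : (j' : ℕ) < m
  · have hj : (j : ℕ) < m := lt_of_le_of_lt hjj' hj'
    simp only [rectDiag, dif_pos hj, dif_pos hj']
    exact hS _ _ _ _ rfl rfl hjj'
  · simp only [rectDiag, dif_neg hj']
    exact rectDiag_nonneg hS0 j

lemma submatrix_castLE_eq_iff {r : ℕ} {α : Type*} (h : r ≤ n) {A B : Matrix (Fin n) α R} :
    A.submatrix (Fin.castLE h) id = B.submatrix (Fin.castLE h) id ↔
      ∀ k : Fin n, (k : ℕ) < r → A k = B k := by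
  constructor
  · intro hAB k hk
    exact congrFun hAB ⟨k, hk⟩
  · intro hAB
    ext i a
    exact congrFun (hAB _ i.isLt) a

lemma eq_mul_mul_transpose_iff [CommRing R] {κ ι : Type*} [Fintype ι] [DecidableEq ι]
    {A : Matrix κ ι R} {P W : Matrix ι ι R} (hW : Wᵀ * W = 1) :
    A = A * (P * Wᵀ) ↔ A * W = A * P := by
  constructor
  · intro h
    calc A * W = A * (P * Wᵀ) * W := by rw [← h]
      _ = A * P := by rw [Matrix.mul_assoc, Matrix.mul_assoc, hW, Matrix.mul_one]
  · intro h
    calc A = A * W * Wᵀ := by rw [Matrix.mul_assoc, mul_eq_one_comm.mp hW, Matrix.mul_one]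
      _ = A * (P * Wᵀ) := by rw [h, Matrix.mul_assoc]

section Semiring

variable [Semiring R] {S : Matrix (Fin m) (Fin n) R}

lemma IsRectDiag.mul_apply (hS : S.IsRectDiag) {α : Type*} (A : Matrix (Fin n) α R)
    (i : Fin m) (a : α) :
    (S * A) i a = if h : (i : ℕ) < n then rectDiag S ⟨i, h⟩ * A ⟨i, h⟩ a else 0 := by
  rw [Matrix.mul_apply]
  split_ifs with h
  · rw [Finset.sum_eq_single_of_mem ⟨i, h⟩ (Finset.mem_univ _),
      apply_eq_rectDiag S i ⟨i, h⟩ rfl]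
    intro k _ hk
    rw [hS i k fun hik => hk (Fin.ext hik.symm), zero_mul]
  · exact Finset.sum_eq_zero fun k _ => by rw [hS i k (by omega), zero_mul]

lemma IsRectDiag.transpose_mul_self (hS : S.IsRectDiag) :
    Sᵀ * S = diagonal fun j => rectDiag S j * rectDiag S j := by
  ext j j'
  rw [Matrix.mul_apply, diagonal_apply]
  split_ifs with hjj'
  · subst hjj'
    by_cases hj : (j : ℕ) < m
    · rw [Finset.sum_eq_single_of_mem ⟨j, hj⟩ (Finset.mem_univ _), transpose_apply,
        apply_eq_rectDiag S ⟨j, hj⟩ j rfl]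
      intro i _ hi
      rw [transpose_apply, hS i j fun hij => hi (Fin.ext hij), zero_mul]
    · simp only [rectDiag, dif_neg hj, mul_zero]
      refine Finset.sum_eq_zero fun i _ => ?_
      rw [transpose_apply, hS i j (by omega), zero_mul]
  · refine Finset.sum_eq_zero fun i _ => ?_
    by_cases hij : (i : ℕ) = j
    · rw [hS i j' fun hij' => hjj' (Fin.ext (hij.symm.trans hij')), mul_zero]
    · rw [transpose_apply, hS i j hij, zero_mul]

lemma IsRectDiag.mul_eq_mul_iff [IsLeftCancelMulZero R] (hS : S.IsRectDiag) {α : Type*}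
    (A B : Matrix (Fin n) α R) :
    S * A = S * B ↔ ∀ k, rectDiag S k ≠ 0 → A k = B k := by
  constructor
  · intro hAB k hk
    have hkm : (k : ℕ) < m := by
      by_contra h
      exact hk (dif_neg h)
    ext a
    have hrow := congrFun (congrFun hAB ⟨k, hkm⟩) a
    simp only [hS.mul_apply, dif_pos k.isLt] at hrow
    exact mul_left_cancel₀ hk hrow
  · intro hAB
    ext i a
    simp only [hS.mul_apply]
    split_ifs with h
    · by_cases hi : rectDiag S ⟨i, h⟩ = 0
      · rw [hi, zero_mul, zero_mul]
      · rw [hAB _ hi]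
    · rfl

end Semiring

lemma IsRectDiag.rank_eq_card_rectDiag_ne_zero [Field R] [LinearOrder R]
    [IsStrictOrderedRing R] {S : Matrix (Fin m) (Fin n) R} (hS : S.IsRectDiag) :
    S.rank = Fintype.card {j // rectDiag S j ≠ 0} := by
  rw [← rank_transpose_mul_self, hS.transpose_mul_self, rank_diagonal]
  simp only [mul_self_ne_zero]

end Matrix

theorem XZ_iff_Mr_eq_Nr_Sz_general {m n r : ℕ} (hrn : r ≤ n)
    (X : Matrix (Fin m) (Fin n) ℝ) (Z : Matrix (Fin n) (Fin n) ℝ)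
    (Ux : Matrix (Fin m) (Fin m) ℝ) (Sx : Matrix (Fin m) (Fin n) ℝ)
    (Vx : Matrix (Fin n) (Fin n) ℝ)
    (Uz Vz : Matrix (Fin n) (Fin n) ℝ) (sz : Fin n → ℝ)
    (hUx : Uxᵀ * Ux = 1) (hVx : Vxᵀ * Vx = 1)
    (hVz : Vzᵀ * Vz = 1)
    (hSxoff : ∀ (i : Fin m) (j : Fin n), (i : ℕ) ≠ (j : ℕ) → Sx i j = 0)
    (hSxnonneg : ∀ (i : Fin m) (j : Fin n), (i : ℕ) = (j : ℕ) → 0 ≤ Sx i j)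
    (hSxanti : ∀ (i i' : Fin m) (j j' : Fin n), (i : ℕ) = (j : ℕ) → (i' : ℕ) = (j' : ℕ) →
      (i : ℕ) ≤ (i' : ℕ) → Sx i' j' ≤ Sx i j)
    (hX : X = Ux * Sx * Vxᵀ) (hrank : X.rank = r)
    (hZ : Z = Uz * Matrix.diagonal sz * Vzᵀ) :
    X = X * Z ↔
      (Vxᵀ * Vz).submatrix (Fin.castLE hrn) id
        = (Vxᵀ * Uz).submatrix (Fin.castLE hrn) id * Matrix.diagonal sz := by
  have hSx : IsRectDiag Sx := hSxoff
  have hrankSx : Sx.rank = r := by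
    rw [← hrank, hX,
      rank_mul_eq_left_of_isUnit_det _ _ (isUnit_det_of_left_inverse (mul_eq_one_comm.mp hVx)),
      rank_mul_eq_right_of_isUnit_det _ _ (isUnit_det_of_left_inverse hUx)]
  have hsupp : ∀ k, rectDiag Sx k ≠ 0 ↔ (k : ℕ) < r := by
    rw [← hrankSx, hSx.rank_eq_card_rectDiag_ne_zero]
    exact (antitone_rectDiag hSxnonneg hSxanti).ne_zero_iff_lt_card (rectDiag_nonneg hSxnonneg)
  rw [hZ, eq_mul_mul_transpose_iff hVz, hX]
  simp only [Matrix.mul_assoc]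
  rw [(mul_right_injective_of_inv Uxᵀ Ux hUx).eq_iff, hSx.mul_eq_mul_iff, ← Matrix.mul_assoc]
  refine (forall_congr' fun k => ?_).trans
    (submatrix_castLE_eq_iff (A := Vxᵀ * Vz) (B := Vxᵀ * Uz * diagonal sz) hrn).symm
  rw [hsupp]

/-- Let `X = Ux * Sx * Vxᵀ` be a full SVD of the real `m × n` matrix `X` of rank `r`
(`Ux`, `Vx` orthogonal; `Sx` zero off its main diagonal with nonnegative nonincreasing
diagonal entries), and let `Z = Uz * diagonal sz * Vzᵀ` be a full SVD of the `n × n`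
matrix `Z` (`Uz`, `Vz` orthogonal; `sz` nonnegative and nonincreasing). Set
`M = Vxᵀ * Vz` and `N = Vxᵀ * Uz`, and let `M_r`, `N_r` denote their first `r` rows.
Then `X = X * Z` if and only if `M_r = N_r * diagonal sz`. -/
theorem XZ_iff_Mr_eq_Nr_Sz {m n r : ℕ} (hrm : r ≤ m) (hrn : r ≤ n)
    (X : Matrix (Fin m) (Fin n) ℝ) (Z : Matrix (Fin n) (Fin n) ℝ)
    (Ux : Matrix (Fin m) (Fin m) ℝ) (Sx : Matrix (Fin m) (Fin n) ℝ)
    (Vx : Matrix (Fin n) (Fin n) ℝ)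
    (Uz Vz : Matrix (Fin n) (Fin n) ℝ) (sz : Fin n → ℝ)
    (hUx : Uxᵀ * Ux = 1) (hVx : Vxᵀ * Vx = 1)
    (hUz : Uzᵀ * Uz = 1) (hVz : Vzᵀ * Vz = 1)
    (hSxoff : ∀ (i : Fin m) (j : Fin n), (i : ℕ) ≠ (j : ℕ) → Sx i j = 0)
    (hSxnonneg : ∀ (i : Fin m) (j : Fin n), (i : ℕ) = (j : ℕ) → 0 ≤ Sx i j)
    (hSxanti : ∀ (i i' : Fin m) (j j' : Fin n), (i : ℕ) = (j : ℕ) → (i' : ℕ) = (j' : ℕ) →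
      (i : ℕ) ≤ (i' : ℕ) → Sx i' j' ≤ Sx i j)
    (hX : X = Ux * Sx * Vxᵀ) (hrank : X.rank = r)
    (hsznonneg : ∀ i, 0 ≤ sz i) (hszanti : ∀ i j : Fin n, i ≤ j → sz j ≤ sz i)
    (hZ : Z = Uz * Matrix.diagonal sz * Vzᵀ) :
    X = X * Z ↔
      (Vxᵀ * Vz).submatrix (Fin.castLE hrn) id
        = (Vxᵀ * Uz).submatrix (Fin.castLE hrn) id * Matrix.diagonal sz :=
  XZ_iff_Mr_eq_Nr_Sz_general hrn X Z Ux Sx Vx Uz Vz sz hUx hVx hVz hSxoff hSxnonneg hSxanti hX hrank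
    hZ
end
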